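/- For l > 0 and λ ∈ ℝ \ {0}, define F(k) := 1 − ((λ − ik)/(λ + ik))² e^{2ikl} for k in a neighbourhood of 0 in ℂ. Then the order of vanishing of F at k = 0 equals 3 if l = 2/λ, and equals 1 otherwise. -/

import Mathlib

/-!
Write `F = 1 - Q` with `Q k = ((λ - ik)/(λ + ik))² e^{2ikl}`. Then `Q' = Q P` for the logarithmic
derivative `P k = 2il - 4iλ/(λ² + k²)`, so `Q'' = Q (P² + P')` and `Q''' = Q (P³ + 3PP' + P'')`.
At `k = 0` we have `Q = 1`, `P = 2i(l - 2/λ)`, `P' = 0` and `P'' = 8i/λ³`: hence `F'(0) = -P(0)`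
vanishes exactly when `l = 2/λ`, and then `F''(0) = -P(0)² = 0` while `F'''(0) = -8i/λ³ ≠ 0`.
-/

/-- The secular function F(k) = 1 − ((λ − ik)/(λ + ik))² e^{2ikl}. -/
noncomputable def secF (l lam : ℝ) (k : ℂ) : ℂ :=
  1 - (((lam : ℂ) - Complex.I * k) / ((lam : ℂ) + Complex.I * k)) ^ 2 *
    Complex.exp (2 * Complex.I * k * (l : ℂ))

open Filter Topology Complex

section IteratedDeriv

variable {𝕜 F : Type*} [NontriviallyNormedField 𝕜] [NormedAddCommGroup F] [NormedSpace 𝕜 F]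

theorem iteratedDeriv_succ_eventuallyEq {n : ℕ} {f g g' : 𝕜 → F} {x : 𝕜}
    (h : iteratedDeriv n f =ᶠ[𝓝 x] g) (hg : ∀ᶠ y in 𝓝 x, HasDerivAt g (g' y) y) :
    iteratedDeriv (n + 1) f =ᶠ[𝓝 x] g' := by
  filter_upwards [h.eventuallyEq_nhds, hg] with y hy hgy
  rw [iteratedDeriv_succ, hy.deriv_eq, hgy.deriv]

variable {f p p' : 𝕜 → 𝕜} {x p'' : 𝕜}

theorem iteratedDeriv_one_eventuallyEq_of_hasDerivAt_mul
    (hf : ∀ᶠ y in 𝓝 x, HasDerivAt f (f y * p y) y) :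
    iteratedDeriv 1 f =ᶠ[𝓝 x] fun y ↦ f y * p y :=
  iteratedDeriv_succ_eventuallyEq (by rw [iteratedDeriv_zero]) hf

theorem iteratedDeriv_two_eventuallyEq_of_hasDerivAt_mul
    (hf : ∀ᶠ y in 𝓝 x, HasDerivAt f (f y * p y) y) (hp : ∀ᶠ y in 𝓝 x, HasDerivAt p (p' y) y) :
    iteratedDeriv 2 f =ᶠ[𝓝 x] fun y ↦ f y * (p y ^ 2 + p' y) := by
  refine iteratedDeriv_succ_eventuallyEq (iteratedDeriv_one_eventuallyEq_of_hasDerivAt_mul hf) ?_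
  filter_upwards [hf, hp] with y hfy hpy
  exact (hfy.fun_mul hpy).congr_deriv (by ring)

theorem iteratedDeriv_three_of_hasDerivAt_mul
    (hf : ∀ᶠ y in 𝓝 x, HasDerivAt f (f y * p y) y) (hp : ∀ᶠ y in 𝓝 x, HasDerivAt p (p' y) y)
    (hp' : HasDerivAt p' p'' x) :
    iteratedDeriv 3 f x = f x * (p x ^ 3 + 3 * p x * p' x + p'') := by
  have hd := hf.self_of_nhds.fun_mul ((hp.self_of_nhds.fun_pow 2).fun_add hp')
  rw [iteratedDeriv_succ, (iteratedDeriv_two_eventuallyEq_of_hasDerivAt_mul hf hp).deriv_eq,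
    hd.deriv]
  push_cast
  ring

end IteratedDeriv

noncomputable def secQ (l lam : ℝ) (k : ℂ) : ℂ :=
  ((lam - I * k) / (lam + I * k)) ^ 2 * exp (2 * I * k * l)

noncomputable def secQLogDeriv (l lam : ℝ) (k : ℂ) : ℂ :=
  2 * I * l - 4 * I * lam / (lam ^ 2 + k ^ 2)

section Secular

variable {l lam : ℝ} {k : ℂ}

theorem secF_eq_one_sub_secQ : secF l lam = fun k ↦ 1 - secQ l lam k := rfl

theorem sub_I_mul_mul_add_I_mul (a k : ℂ) : (a - I * k) * (a + I * k) = a ^ 2 + k ^ 2 := by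
  linear_combination (-k ^ 2) * I_sq

theorem hasDerivAt_secQ (hk : (lam : ℂ) ^ 2 + k ^ 2 ≠ 0) :
    HasDerivAt (secQ l lam) (secQ l lam k * secQLogDeriv l lam k) k := by
  rw [← sub_I_mul_mul_add_I_mul] at hk
  obtain ⟨hm, hp⟩ := mul_ne_zero_iff.mp hk
  have h := ((((hasDerivAt_const_mul I).const_sub (lam : ℂ)).fun_div
    ((hasDerivAt_const_mul I).const_add (lam : ℂ)) hp).fun_pow 2).fun_mul
    (((hasDerivAt_const_mul (2 * I)).mul_const (l : ℂ)).cexp)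
  refine h.congr_deriv ?_
  have hsum : -I * (lam + I * k) - (lam - I * k) * I = -2 * I * lam := by ring
  rw [secQ, secQLogDeriv, ← sub_I_mul_mul_add_I_mul, hsum]
  simp only [Nat.cast_ofNat, Nat.add_one_sub_one, pow_one]
  field_simp
  ring

theorem hasDerivAt_sq_add_sq (a k : ℂ) : HasDerivAt (fun k : ℂ ↦ a ^ 2 + k ^ 2) (2 * k) k := by
  simpa using ((hasDerivAt_id k).fun_pow 2).const_add (a ^ 2)

theorem hasDerivAt_secQLogDeriv (hk : (lam : ℂ) ^ 2 + k ^ 2 ≠ 0) :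
    HasDerivAt (secQLogDeriv l lam) (8 * I * lam * k / (lam ^ 2 + k ^ 2) ^ 2) k := by
  have h := ((hasDerivAt_const k (4 * I * lam : ℂ)).fun_div
    (hasDerivAt_sq_add_sq lam k) hk).const_sub (2 * I * l)
  refine h.congr_deriv ?_
  field_simp
  ring

theorem hasDerivAt_deriv_secQLogDeriv_zero (hlam : lam ≠ 0) :
    HasDerivAt (fun k : ℂ ↦ 8 * I * lam * k / (lam ^ 2 + k ^ 2) ^ 2) (8 * I / lam ^ 3) 0 := by
  have hlam : (lam : ℂ) ≠ 0 := ofReal_ne_zero.mpr hlam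
  have h := (hasDerivAt_const_mul (8 * I * lam)).fun_div
    ((hasDerivAt_sq_add_sq lam 0).fun_pow 2) (by simpa using hlam)
  refine h.congr_deriv ?_
  field_simp
  ring

theorem eventually_sq_add_sq_ne_zero (hlam : lam ≠ 0) :
    ∀ᶠ k in 𝓝 (0 : ℂ), (lam : ℂ) ^ 2 + k ^ 2 ≠ 0 := by
  have hc : Continuous fun k : ℂ ↦ (lam : ℂ) ^ 2 + k ^ 2 := by fun_prop
  exact hc.continuousAt.eventually_ne (by simpa using hlam)

theorem secQ_zero (hlam : lam ≠ 0) : secQ l lam 0 = 1 := by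
  simp [secQ, ofReal_ne_zero.mpr hlam]

theorem secQLogDeriv_zero_eq_zero_iff (hlam : lam ≠ 0) :
    secQLogDeriv l lam 0 = 0 ↔ l = 2 / lam := by
  have hlam : (lam : ℂ) ≠ 0 := ofReal_ne_zero.mpr hlam
  have h : secQLogDeriv l lam 0 = 2 * I * (l - 2 / lam) := by
    rw [secQLogDeriv]
    field_simp
    ring
  rw [h, mul_eq_zero, sub_eq_zero]
  simp only [two_ne_zero, I_ne_zero, mul_eq_zero, or_self, false_or]
  norm_cast

end Secular

theorem stmt12 (l lam : ℝ) (hlam : lam ≠ 0) :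
    (l = 2 / lam →
      (secF l lam 0 = 0 ∧ deriv (secF l lam) 0 = 0 ∧
        iteratedDeriv 2 (secF l lam) 0 = 0 ∧ iteratedDeriv 3 (secF l lam) 0 ≠ 0)) ∧
    (l ≠ 2 / lam → (secF l lam 0 = 0 ∧ deriv (secF l lam) 0 ≠ 0)) := by
  have hk := eventually_sq_add_sq_ne_zero hlam
  have hQ := hk.mono fun k ↦ hasDerivAt_secQ (l := l)
  have hP := hk.mono fun k ↦ hasDerivAt_secQLogDeriv (l := l)
  have hQ0 : secQ l lam 0 = 1 := secQ_zero hlam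
  have hF (n : ℕ) (hn : 0 < n) :
      iteratedDeriv n (secF l lam) 0 = -iteratedDeriv n (secQ l lam) 0 := by
    rw [secF_eq_one_sub_secQ, iteratedDeriv_const_sub hn, iteratedDeriv_neg]
  have hF0 : secF l lam 0 = 0 := by simp [secF_eq_one_sub_secQ, hQ0]
  have hd1 : deriv (secF l lam) 0 = -secQLogDeriv l lam 0 := by
    rw [← iteratedDeriv_one, hF 1 one_pos,
      (iteratedDeriv_one_eventuallyEq_of_hasDerivAt_mul hQ).eq_of_nhds]
    simp [hQ0]
  have hd2 : iteratedDeriv 2 (secF l lam) 0 = -secQLogDeriv l lam 0 ^ 2 := by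
    rw [hF 2 two_pos, (iteratedDeriv_two_eventuallyEq_of_hasDerivAt_mul hQ hP).eq_of_nhds]
    simp [hQ0]
  have hd3 : iteratedDeriv 3 (secF l lam) 0 = -(secQLogDeriv l lam 0 ^ 3 + 8 * I / lam ^ 3) := by
    rw [hF 3 three_pos, iteratedDeriv_three_of_hasDerivAt_mul hQ hP
      (hasDerivAt_deriv_secQLogDeriv_zero hlam)]
    simp [hQ0]
  refine ⟨fun h ↦ ?_, fun h ↦ ⟨hF0, ?_⟩⟩
  · rw [← secQLogDeriv_zero_eq_zero_iff hlam] at h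
    simp [hF0, hd1, hd2, hd3, h, I_ne_zero, hlam]
  · rwa [hd1, neg_ne_zero, Ne, secQLogDeriv_zero_eq_zero_iff hlam]
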